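/- Let T be a standard k-shape tableau and suppose the letter n occupies ℓ+1 cells forming a cover c_n. Let charge'(n) be the charge of letter n computed as if n↑ were located at the position of n↓. Then charge'(n) − charge(n) = ℓ = |c_n| − 1. -/

import Mathlib

open Classical

structure KPartition where
  parts : ℕ → ℕ
  antitone' : ∀ i j : ℕ, i ≤ j → parts j ≤ parts i
  finite' : ∃ N : ℕ, ∀ i : ℕ, N ≤ i → parts i = 0

namespace KPartition

def empty : KPartition :=
  ⟨fun _ => 0, fun _ _ _ => le_rfl, ⟨0, fun _ _ => rfl⟩⟩

def Mem (lam : KPartition) (b : ℕ × ℕ) : Prop := b.2 < lam.parts b.1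

def Le (lam mu : KPartition) : Prop := ∀ i : ℕ, lam.parts i ≤ mu.parts i

noncomputable def conj (lam : KPartition) (j : ℕ) : ℕ :=
  @Nat.find (fun i => lam.parts i ≤ j) (Classical.decPred _)
    (by
      obtain ⟨N, hN⟩ := lam.finite'
      exact ⟨N, show lam.parts N ≤ j by rw [hN N le_rfl]; exact Nat.zero_le j⟩)

noncomputable def hook (lam : KPartition) (i j : ℕ) : ℕ :=
  (lam.parts i - j) + (lam.conj j - i) - 1

noncomputable def rsk (k : ℕ) (lam : KPartition) (i : ℕ) : ℕ :=
  Nat.card {j : ℕ | lam.Mem (i, j) ∧ lam.hook i j ≤ k}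

noncomputable def csk (k : ℕ) (lam : KPartition) (j : ℕ) : ℕ :=
  Nat.card {i : ℕ | lam.Mem (i, j) ∧ lam.hook i j ≤ k}

def IsKShape (k : ℕ) (lam : KPartition) : Prop :=
  (∀ i i' : ℕ, i ≤ i' → rsk k lam i' ≤ rsk k lam i) ∧
  (∀ j j' : ℕ, j ≤ j' → csk k lam j' ≤ csk k lam j)

def IsCore (p : ℕ) (lam : KPartition) : Prop :=
  ∀ i j : ℕ, lam.Mem (i, j) → lam.hook i j ≠ p

noncomputable def psize (lam : KPartition) : ℕ := Nat.card {b : ℕ × ℕ | lam.Mem b}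

noncomputable def intSize (k : ℕ) (lam : KPartition) : ℕ :=
  Nat.card {b : ℕ × ℕ | lam.Mem b ∧ k < lam.hook b.1 b.2}

noncomputable def bdrySize (k : ℕ) (lam : KPartition) : ℕ :=
  Nat.card {b : ℕ × ℕ | lam.Mem b ∧ lam.hook b.1 b.2 ≤ k}

noncomputable def union (lam mu : KPartition) : KPartition :=
  ⟨fun i => max (lam.parts i) (mu.parts i),
   fun i j h => max_le_max (lam.antitone' i j h) (mu.antitone' i j h),
   by
     obtain ⟨N, hN⟩ := lam.finite'
     obtain ⟨M, hM⟩ := mu.finite'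
     refine ⟨max N M, fun i hi => ?_⟩
     show max (lam.parts i) (mu.parts i) = 0
     rw [hN i (le_trans (le_max_left _ _) hi), hM i (le_trans (le_max_right _ _) hi)]
     simp⟩

end KPartition

open KPartition

def diagIdx (b : ℕ × ℕ) : ℤ := (b.2 : ℤ) - (b.1 : ℤ)

def cellDist (b b' : ℕ × ℕ) : ℕ := (diagIdx b - diagIdx b').natAbs

def Contiguous (k : ℕ) (b b' : ℕ × ℕ) : Prop :=
  cellDist b b' = k ∨ cellDist b b' = k + 1

def HasAddable (lam : KPartition) (i : ℕ) : Prop :=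
  i = 0 ∨ lam.parts i < lam.parts (i - 1)

def addCorner (lam : KPartition) (i : ℕ) : ℕ × ℕ := (i, lam.parts i)

def IsAddableCell (lam : KPartition) (b : ℕ × ℕ) : Prop :=
  HasAddable lam b.1 ∧ b.2 = lam.parts b.1

def HasRemovable (lam : KPartition) (i : ℕ) : Prop := lam.parts (i + 1) < lam.parts i

def remCorner (lam : KPartition) (i : ℕ) : ℕ × ℕ := (i, lam.parts i - 1)

def KConnectedBelow (k : ℕ) (lam : KPartition) (r r' : ℕ) : Prop :=
  r' < r ∧ HasAddable lam r ∧ HasAddable lam r' ∧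
    cellDist (addCorner lam r) (addCorner lam r') ≤ k + 1 ∧
    ∀ r'' : ℕ, r'' < r' → HasAddable lam r'' →
      ¬ cellDist (addCorner lam r) (addCorner lam r'') ≤ k + 1

def ContigConnected (k : ℕ) (lam : KPartition) (r r' : ℕ) : Prop :=
  KConnectedBelow k lam r r' ∧ Contiguous k (addCorner lam r) (addCorner lam r')

inductive InChain (k : ℕ) (lam : KPartition) (r : ℕ) : ℕ → Prop
  | refl : InChain k lam r r
  | step {s s' : ℕ} : InChain k lam r s → KConnectedBelow k lam s s' → InChain k lam r s'

noncomputable def iCC (k : ℕ) (lam : KPartition) (top bot : ℕ) (ct cb : Bool) : ℕ :=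
  Nat.card {s : ℕ | InChain k lam top s ∧ (if cb then bot ≤ s else bot < s) ∧
    (ct = true ∨ s ≠ top)}

noncomputable def rowUp (lam mu : KPartition) : ℕ := sSup {i : ℕ | lam.parts i < mu.parts i}

noncomputable def rowDown (lam mu : KPartition) : ℕ := sInf {i : ℕ | lam.parts i < mu.parts i}

noncomputable def chargeStepVal (k : ℕ) (sh : KPartition) (r r' : ℕ) : ℤ :=
  if r' ≤ r then (iCC k sh r r' true false : ℤ) else -(iCC k sh r' r false true : ℤ)

noncomputable def cochargeStepVal (k : ℕ) (sh : KPartition) (r r' : ℕ) : ℤ :=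
  if r' < r then -(iCC k sh r r' false false : ℤ) else (iCC k sh r' r true true : ℤ)

noncomputable def chargeLet (k : ℕ) (T : ℕ → KPartition) : ℕ → ℤ
  | 0 => 0
  | 1 => 0
  | n + 2 =>
    chargeLet k T (n + 1) +
      chargeStepVal k (T (n + 1)) (rowUp (T n) (T (n + 1)) + 1)
        (rowUp (T (n + 1)) (T (n + 2)))

noncomputable def cochargeLet (k : ℕ) (T : ℕ → KPartition) : ℕ → ℤ
  | 0 => 0
  | 1 => 0
  | n + 2 =>
    cochargeLet k T (n + 1) +
      cochargeStepVal k (T (n + 1)) (rowDown (T n) (T (n + 1)) + 1)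
        (rowDown (T (n + 1)) (T (n + 2)))

noncomputable def chargeTab (k : ℕ) (T : ℕ → KPartition) (N : ℕ) : ℤ :=
  ∑ n ∈ Finset.range N, chargeLet k T (n + 1)

noncomputable def cochargeTab (k : ℕ) (T : ℕ → KPartition) (N : ℕ) : ℤ :=
  ∑ n ∈ Finset.range N, cochargeLet k T (n + 1)

def skewSet (lam mu : KPartition) : Set (ℕ × ℕ) := {b | mu.Mem b ∧ ¬ lam.Mem b}

def IsStringOf (k : ℕ) (lam mu : KPartition) (ℓ : ℕ) (a : ℕ → ℕ × ℕ) : Prop :=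
  KPartition.Le lam mu ∧
  (∀ b : ℕ × ℕ, b ∈ skewSet lam mu ↔ ∃ i < ℓ, a i = b) ∧
  (∀ i j : ℕ, i < ℓ → j < ℓ → a i = a j → i = j) ∧
  (∀ i : ℕ, i + 1 < ℓ → (a (i + 1)).1 < (a i).1 ∧ Contiguous k (a i) (a (i + 1)))

def IsRowTypeStringOf (k : ℕ) (lam mu : KPartition) (ℓ : ℕ) (a : ℕ → ℕ × ℕ) : Prop :=
  IsStringOf k lam mu ℓ a ∧ ∀ i : ℕ, rsk k mu i = rsk k lam i

def IsColTypeStringOf (k : ℕ) (lam mu : KPartition) (ℓ : ℕ) (a : ℕ → ℕ × ℕ) : Prop :=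
  IsStringOf k lam mu ℓ a ∧ ∀ j : ℕ, csk k mu j = csk k lam j

def TranslateBy (v : ℤ × ℤ) (b b' : ℕ × ℕ) : Prop :=
  (b'.1 : ℤ) = (b.1 : ℤ) + v.1 ∧ (b'.2 : ℤ) = (b.2 : ℤ) + v.2

def IsRowMove (k ℓ r : ℕ) (lam mu : KPartition) : Prop :=
  1 ≤ r ∧ 1 ≤ ℓ ∧ IsKShape k lam ∧ IsKShape k mu ∧
  ∃ (c : ℕ → KPartition) (a : ℕ → ℕ → ℕ × ℕ),
    c 0 = lam ∧ c r = mu ∧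
    (∀ i < r, IsRowTypeStringOf k (c i) (c (i + 1)) ℓ (a i)) ∧
    (∀ i < r, ∃ v : ℤ × ℤ, ∀ t < ℓ, TranslateBy v (a 0 t) (a i t)) ∧
    (∀ i : ℕ, i + 1 < r → (a (i + 1) 0).2 = (a i 0).2 + 1)

def IsColMove (k ℓ r : ℕ) (lam mu : KPartition) : Prop :=
  1 ≤ r ∧ 1 ≤ ℓ ∧ IsKShape k lam ∧ IsKShape k mu ∧
  ∃ (c : ℕ → KPartition) (a : ℕ → ℕ → ℕ × ℕ),
    c 0 = lam ∧ c r = mu ∧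
    (∀ i < r, IsColTypeStringOf k (c i) (c (i + 1)) ℓ (a i)) ∧
    (∀ i < r, ∃ v : ℤ × ℤ, ∀ t < ℓ, TranslateBy v (a 0 t) (a i t)) ∧
    (∀ i : ℕ, i + 1 < r → (a (i + 1) (ℓ - 1)).1 = (a i (ℓ - 1)).1 + 1)

def IsMoveOf (k ℓ r : ℕ) (isRow : Bool) (lam mu : KPartition) : Prop :=
  if isRow then IsRowMove k ℓ r lam mu else IsColMove k ℓ r lam mu

def MoveRel (k : ℕ) (lam mu : KPartition) : Prop :=
  ∃ ℓ r : ℕ, IsRowMove k ℓ r lam mu ∨ IsColMove k ℓ r lam mu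

def IsCover (k : ℕ) (lam mu : KPartition) : Prop :=
  IsKShape k lam ∧ IsKShape k mu ∧
  ∃ (ℓ : ℕ) (a : ℕ → ℕ × ℕ), 1 ≤ ℓ ∧ IsStringOf k lam mu ℓ a ∧
    (∃ i : ℕ, rsk k lam i < rsk k mu i) ∧ (∃ j : ℕ, csk k lam j < csk k mu j)

noncomputable def topCellC (lam mu : KPartition) : ℕ × ℕ :=
  (rowUp lam mu, lam.parts (rowUp lam mu))

noncomputable def botCellC (lam mu : KPartition) : ℕ × ℕ :=
  (rowDown lam mu, lam.parts (rowDown lam mu))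

def CanContinueBelow (k : ℕ) (lam mu : KPartition) : Prop :=
  ∃ i : ℕ, HasAddable lam i ∧ i < rowDown lam mu ∧
    Contiguous k (botCellC lam mu) (addCorner lam i)

def CanContinueAbove (k : ℕ) (lam mu : KPartition) : Prop :=
  ∃ i : ℕ, HasAddable lam i ∧ rowUp lam mu < i ∧
    Contiguous k (addCorner lam i) (topCellC lam mu)

def RevContinueBelow (k : ℕ) (lam mu : KPartition) : Prop :=
  ∃ i : ℕ, HasRemovable mu i ∧ i < rowDown lam mu ∧
    Contiguous k (botCellC lam mu) (remCorner mu i)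

def RevContinueAbove (k : ℕ) (lam mu : KPartition) : Prop :=
  ∃ i : ℕ, HasRemovable mu i ∧ rowUp lam mu < i ∧
    Contiguous k (remCorner mu i) (topCellC lam mu)

def IsMaximalCover (k : ℕ) (lam mu : KPartition) : Prop :=
  IsCover k lam mu ∧ ¬ CanContinueAbove k lam mu ∧ ¬ CanContinueBelow k lam mu

def IsReverseMaximalCover (k : ℕ) (lam mu : KPartition) : Prop :=
  IsCover k lam mu ∧ ¬ RevContinueAbove k lam mu ∧ ¬ RevContinueBelow k lam mu

def StdKShapeTableau (k N : ℕ) (T : ℕ → KPartition) : Prop :=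
  T 0 = KPartition.empty ∧ ∀ n < N, IsCover k (T n) (T (n + 1))

def HorizStrip (lam mu : KPartition) : Prop :=
  KPartition.Le lam mu ∧ ∀ j : ℕ, mu.conj j ≤ lam.conj j + 1

def VertStrip (lam mu : KPartition) : Prop :=
  KPartition.Le lam mu ∧ ∀ i : ℕ, mu.parts i ≤ lam.parts i + 1

def IsStdKTableau (k N : ℕ) (T : ℕ → KPartition) : Prop :=
  T 0 = KPartition.empty ∧ (∀ n ≤ N, IsCore (k + 1) (T n)) ∧
  ∀ n < N, HorizStrip (T n) (T (n + 1)) ∧ VertStrip (T n) (T (n + 1)) ∧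
    bdrySize k (T (n + 1)) = bdrySize k (T n) + 1

def cellResidue (k : ℕ) (b : ℕ × ℕ) : ZMod (k + 1) :=
  (b.2 : ZMod (k + 1)) - (b.1 : ZMod (k + 1))

def GroundPos (lam : KPartition) (i j : ℕ) : Prop :=
  1 ≤ i ∧ lam.parts i ≤ j ∧ j < lam.parts (i - 1)

noncomputable def diagCount (k : ℕ) (e : ZMod (k + 1)) (b b' : ℕ × ℕ) : ℕ :=
  Nat.card {d : ℤ | min (diagIdx b) (diagIdx b') < d ∧
    d < max (diagIdx b) (diagIdx b') ∧ (d : ZMod (k + 1)) = e}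

noncomputable def upCell (lam mu : KPartition) : ℕ × ℕ :=
  (rowUp lam mu, lam.parts (rowUp lam mu))

def shiftU (S : Set (ℕ × ℕ)) : Set (ℕ × ℕ) := (fun b => (b.1 + 1, b.2)) '' S

/-!
Let `a 0, …, a (ℓ - 1)` be the cells of `c_n`, in rows `ru = (a 0).1 > ⋯ > rd = (a (ℓ - 1)).1`,
and let `λ` be the shape of `T_{n-1}`. Every cell of the string is the addable corner of its row
in `λ`, and consecutive rows of the string are `k`-connected, so the chain from `ru` runs through
all rows of the string down to `rd`. A chain starting at an addable row `s` with
`(a (t + 1)).1 < s ≤ (a t).1` steps into the next gap of the string (its corner is within `k + 1`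
diagonals of `a (t + 1)` but farther from `a (t + 2)`), so it meets `(rd, ru]` exactly
`ℓ - 1 - t` times. A chain starting above `ru` cannot stop, since in a `k`-shape every addable row
but row `0` is `k`-connected to a lower one; it therefore enters the first gap and meets
`(rd, ru]` exactly `ℓ - 1` times. Comparing the interval counts that define the two charges, for
`r` below, inside and above the string, gives the difference `ℓ - 1 = |c_n| - 1`.
-/

namespace KPartition

variable {lam : KPartition} {i j s : ℕ}

lemma antitone_parts (lam : KPartition) : Antitone lam.parts := fun i j h => lam.antitone' i j h

lemma parts_conj_le (lam : KPartition) (j : ℕ) : lam.parts (lam.conj j) ≤ j :=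
  @Nat.find_spec (fun i => lam.parts i ≤ j) (Classical.decPred _) _

lemma conj_le_of_parts_le (h : lam.parts i ≤ j) : lam.conj j ≤ i :=
  @Nat.find_min' (fun i => lam.parts i ≤ j) (Classical.decPred _) _ i h

lemma lt_conj_iff : i < lam.conj j ↔ j < lam.parts i :=
  ⟨fun h => not_le.1 fun h' => (conj_le_of_parts_le h').not_gt h,
    fun h => not_le.1 fun h' => ((lam.antitone_parts h').trans (lam.parts_conj_le j)).not_gt h⟩

lemma conj_eq_succ (h₁ : lam.parts (s + 1) ≤ j) (h₂ : j < lam.parts s) : lam.conj j = s + 1 :=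
  le_antisymm (conj_le_of_parts_le h₁) (lt_conj_iff.2 h₂)

lemma finite_setOf_mem (lam : KPartition) : {b : ℕ × ℕ | lam.Mem b}.Finite := by
  obtain ⟨N, hN⟩ := lam.finite'
  refine ((Set.finite_Iio N).prod (Set.finite_Iio (lam.parts 0))).subset fun b hb => ?_
  have hb : b.2 < lam.parts b.1 := hb
  refine ⟨Set.mem_Iio.2 (not_le.1 fun hNb => ?_), hb.trans_le (lam.antitone_parts (Nat.zero_le _))⟩
  rw [hN b.1 hNb] at hb
  exact Nat.not_lt_zero _ hb

end KPartition

open KPartition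

section Corners

variable {lam : KPartition} {i j s : ℕ}

@[simp]
lemma diagIdx_addCorner (lam : KPartition) (i : ℕ) :
    diagIdx (addCorner lam i) = (lam.parts i : ℤ) - i := rfl

lemma diagIdx_addCorner_le (h : i ≤ j) : diagIdx (addCorner lam j) ≤ diagIdx (addCorner lam i) := by
  have := lam.antitone_parts h
  simp only [diagIdx_addCorner]
  omega

lemma diagIdx_addCorner_lt (h : i < j) : diagIdx (addCorner lam j) < diagIdx (addCorner lam i) := by
  have := lam.antitone_parts h.le
  simp only [diagIdx_addCorner]
  omega

lemma HasAddable.diagIdx_addCorner_add_two_le (hs : HasAddable lam s) (h : i < s) :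
    diagIdx (addCorner lam s) + 2 ≤ diagIdx (addCorner lam i) := by
  have hs' : lam.parts s < lam.parts (s - 1) := hs.resolve_left (by omega)
  have := lam.antitone_parts (show i ≤ s - 1 by omega)
  simp only [diagIdx_addCorner]
  omega

lemma HasRemovable.hook_eq_one (hs : HasRemovable lam s) : lam.hook s (lam.parts s - 1) = 1 := by
  have hs : lam.parts (s + 1) < lam.parts s := hs
  rw [hook, conj_eq_succ (by omega) (by omega : lam.parts s - 1 < lam.parts s)]
  omega

end Corners

section Chains

variable {k : ℕ} {lam : KPartition} {i j m r s u : ℕ}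

lemma KConnectedBelow.lt (hu : KConnectedBelow k lam r u) : u < r := hu.1

lemma KConnectedBelow.hasAddable (hu : KConnectedBelow k lam r u) : HasAddable lam u := hu.2.2.1

lemma KConnectedBelow.le_of_cellDist_le (hu : KConnectedBelow k lam r u) (hm : HasAddable lam m)
    (hd : cellDist (addCorner lam r) (addCorner lam m) ≤ k + 1) : u ≤ m :=
  not_lt.1 fun h => hu.2.2.2.2 m h hm hd

lemma KConnectedBelow.unique (hu : KConnectedBelow k lam r u) (hv : KConnectedBelow k lam r m) :
    u = m :=
  le_antisymm (hu.le_of_cellDist_le hv.hasAddable hv.2.2.2.1)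
    (hv.le_of_cellDist_le hu.hasAddable hu.2.2.2.1)

lemma exists_kConnectedBelow_le (hr : HasAddable lam r) (hm : HasAddable lam m) (hmr : m < r)
    (hd : cellDist (addCorner lam r) (addCorner lam m) ≤ k + 1) :
    ∃ u, KConnectedBelow k lam r u ∧ u ≤ m := by
  have hex : ∃ u, HasAddable lam u ∧ u < r ∧
      cellDist (addCorner lam r) (addCorner lam u) ≤ k + 1 := ⟨m, hm, hmr, hd⟩
  obtain ⟨hu, hur, hud⟩ := Nat.find_spec hex
  exact ⟨Nat.find hex, ⟨hur, hr, hu, hud, fun v hv hva hvd =>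
    Nat.find_min hex hv ⟨hva, hv.trans hur, hvd⟩⟩, Nat.find_min' hex ⟨hm, hmr, hd⟩⟩

/-- The corner of `r` lies at least two diagonals before that of any row `i < r`, so the corner of
a row at or above `j` is more than `k + 1` diagonals away from it. -/
lemma KConnectedBelow.lt_of_diagIdx_le (hu : KConnectedBelow k lam r u) (hi : i < r)
    (hj : diagIdx (addCorner lam i) + k ≤ diagIdx (addCorner lam j)) : j < u := by
  by_contra! hju
  have h₁ := hu.2.1.diagIdx_addCorner_add_two_le hi
  have h₂ := diagIdx_addCorner_le (lam := lam) hju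
  have h₃ : cellDist (addCorner lam r) (addCorner lam u) ≤ k + 1 := hu.2.2.2.1
  unfold cellDist at h₃
  omega

lemma InChain.le (h : InChain k lam r s) : s ≤ r := by
  induction h with
  | refl => exact le_rfl
  | step _ hs ih => exact hs.lt.le.trans ih

def chainFrom (k : ℕ) (lam : KPartition) (r : ℕ) : Set ℕ := {s | InChain k lam r s}

lemma chainFrom_subset_Iic : chainFrom k lam r ⊆ Set.Iic r := fun _ h => InChain.le h

lemma finite_chainFrom : (chainFrom k lam r).Finite :=
  (Set.finite_Iic r).subset chainFrom_subset_Iic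

lemma chainFrom_eq_insert (hu : KConnectedBelow k lam r u) :
    chainFrom k lam r = insert r (chainFrom k lam u) := by
  ext s
  simp only [chainFrom, Set.mem_insert_iff, Set.mem_ofPred_eq]
  constructor
  · intro h
    induction h with
    | refl => exact Or.inl rfl
    | step _ hs ih =>
      rcases ih with rfl | ih
      · obtain rfl := hu.unique hs
        exact Or.inr .refl
      · exact Or.inr (ih.step hs)
  · rintro (rfl | h)
    · exact .refl
    · induction h with
      | refl => exact InChain.refl.step hu
      | step _ hs ih => exact ih.step hs

lemma chainFrom_inter_eq_empty {X : Set ℕ} (hX : ∀ x ∈ X, r < x) : chainFrom k lam r ∩ X = ∅ :=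
  Set.eq_empty_of_forall_notMem fun x hx => (hX x hx.2).not_ge (InChain.le hx.1)

lemma ncard_chainFrom_inter_of_mem (hu : KConnectedBelow k lam r u) {X : Set ℕ} (hr : r ∈ X) :
    (chainFrom k lam r ∩ X).ncard = (chainFrom k lam u ∩ X).ncard + 1 := by
  rw [chainFrom_eq_insert hu, Set.insert_inter_of_mem hr,
    Set.ncard_insert_of_notMem (fun h => hu.lt.not_ge (InChain.le h.1))
      (finite_chainFrom.inter_of_left X)]

lemma ncard_chainFrom_inter_of_notMem (hu : KConnectedBelow k lam r u) {X : Set ℕ} (hr : r ∉ X) :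
    (chainFrom k lam r ∩ X).ncard = (chainFrom k lam u ∩ X).ncard := by
  rw [chainFrom_eq_insert hu, Set.insert_inter_of_notMem hr]

end Chains

namespace KPartition

variable {k : ℕ} {lam : KPartition} {s : ℕ}

lemma HasRemovable.rsk_pos (hk : 1 ≤ k) (hs : HasRemovable lam s) : 0 < rsk k lam s := by
  rw [rsk, Nat.card_coe_set_eq,
    Set.ncard_pos ((Set.finite_Iio (lam.parts s)).subset fun j hj => hj.1)]
  exact ⟨lam.parts s - 1, show lam.parts s - 1 < lam.parts s by unfold HasRemovable at hs; omega,
    hs.hook_eq_one.trans_le hk⟩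

/-- `lam.conj (lam.parts s)` is the first row of length `lam.parts s`, so the left side is the
height of the block of equal rows ending at `s`. If it exceeded `k`, the first row of the block
would have no cell of hook at most `k`, while its last row, having a removable corner, has one. -/
lemma IsKShape.succ_sub_conj_parts_le (hk : 1 ≤ k) (hks : IsKShape k lam)
    (hs : HasRemovable lam s) :
    s + 1 - lam.conj (lam.parts s) ≤ k := by
  set i := lam.conj (lam.parts s)
  have hi : i ≤ s := conj_le_of_parts_le le_rfl
  by_contra hd
  have hrow : rsk k lam i = 0 := by
    rw [rsk, Nat.card_coe_set_eq, Set.ncard_eq_zero (Set.finite_Iio (lam.parts i) |>.subset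
      fun j hj => hj.1)]
    refine Set.eq_empty_of_forall_notMem fun j ⟨hj, hhook⟩ => ?_
    have hji : j < lam.parts s := hj.trans_le (lam.parts_conj_le _)
    have hsj : s < lam.conj j := lt_conj_iff.2 hji
    have hpi := lam.antitone_parts hi
    rw [hook] at hhook
    omega
  have := hks.1 i s hi
  have := hs.rsk_pos hk
  omega

/-- Column `lam.parts s - 1` has a cell of hook at most `k` in every row of the block, whereas
column `lam.parts (s + 1)` has at most `k + 1 - (lam.parts s - lam.parts (s + 1))` of them. -/
lemma IsKShape.parts_sub_add_succ_sub_conj_le (hk : 1 ≤ k) (hks : IsKShape k lam)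
    (hs : HasRemovable lam s) :
    lam.parts s - lam.parts (s + 1) + (s + 1 - lam.conj (lam.parts s)) ≤ k + 1 := by
  have hd := hks.succ_sub_conj_parts_le hk hs
  have hqp : lam.parts (s + 1) < lam.parts s := hs
  have hblock : ∀ m ≤ s, lam.parts s ≤ lam.parts m := fun m hm => lam.antitone_parts hm
  have hpi := lam.parts_conj_le (lam.parts s)
  have hi : lam.conj (lam.parts s) ≤ s := conj_le_of_parts_le le_rfl
  have hcp : lam.conj (lam.parts s - 1) = s + 1 := conj_eq_succ (by omega) (by omega)
  have hcq : lam.conj (lam.parts (s + 1)) = s + 1 := conj_eq_succ le_rfl hqp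
  have hcsk := hks.2 (lam.parts (s + 1)) (lam.parts s - 1) (by omega)
  set p := lam.parts s
  set q := lam.parts (s + 1)
  set i := lam.conj p
  clear_value p q i
  have hcol_p : s + 1 - i ≤ csk k lam (p - 1) := by
    rw [csk, Nat.card_coe_set_eq, ← Nat.card_Ico, ← Set.ncard_coe_finset, Finset.coe_Ico]
    refine Set.ncard_le_ncard (fun m ⟨him, hms⟩ => ?_)
      ((Set.finite_Iio (s + 1)).subset fun m hm => ?_)
    · have hpm : lam.parts m ≤ p := (lam.antitone_parts him).trans hpi
      have := hblock m (by omega)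
      refine ⟨show p - 1 < lam.parts m by omega, ?_⟩
      rw [hook, hcp]
      omega
    · rw [← hcp]
      exact lt_conj_iff.2 hm.1
  have hcol_q : csk k lam q ≤ k + 1 - (p - q) := by
    rw [csk, Nat.card_coe_set_eq]
    refine (Set.ncard_le_ncard (t := Set.Ico (s + 1 - (k + 1 - (p - q))) (s + 1))
      (fun m hm => ?_)).trans (by simp; omega)
    have hms : m < s + 1 := hcq ▸ lt_conj_iff.2 hm.1
    have := hblock m (by omega)
    have hhook := hm.2
    rw [hook, hcq] at hhook
    exact ⟨by omega, hms⟩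
  omega

/-- The row at the top of the block ending at `s` is addable and, by the previous bound, its
corner is within `k + 1` diagonals of the corner of `s + 1`. -/
theorem IsKShape.exists_kConnectedBelow (hk : 1 ≤ k) (hks : IsKShape k lam)
    (hs : HasAddable lam (s + 1)) : ∃ u, KConnectedBelow k lam (s + 1) u := by
  have hrem : HasRemovable lam s := hs.resolve_left (Nat.succ_ne_zero s)
  have hi : lam.conj (lam.parts s) ≤ s := conj_le_of_parts_le le_rfl
  have hpi : lam.parts (lam.conj (lam.parts s)) = lam.parts s :=
    le_antisymm (lam.parts_conj_le _) (lam.antitone_parts hi)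
  have hadd : HasAddable lam (lam.conj (lam.parts s)) := by
    refine (Nat.eq_zero_or_pos _).imp id fun hpos => ?_
    rw [hpi]
    exact lt_conj_iff.1 (Nat.sub_lt hpos one_pos)
  obtain ⟨u, hu, -⟩ := exists_kConnectedBelow_le (k := k) hs hadd (by omega) (by
    have := hks.parts_sub_add_succ_sub_conj_le hk hrem
    have : lam.parts (s + 1) < lam.parts s := hrem
    simp only [cellDist, diagIdx_addCorner, hpi]
    omega)
  exact ⟨u, hu⟩

end KPartition

section ChargeStep

variable {k : ℕ} {lam : KPartition} {r r' : ℕ}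

lemma chargeStepVal_of_le (h : r' ≤ r) :
    chargeStepVal k lam r r' = (chainFrom k lam r ∩ Set.Ioi r').ncard := by
  rw [chargeStepVal, if_pos h, iCC, Nat.card_coe_set_eq]
  congr 2
  ext s
  simp [chainFrom]

lemma chargeStepVal_of_ge (h : r ≤ r') :
    chargeStepVal k lam r r' = 1 - (chainFrom k lam r' ∩ Set.Ici r).ncard := by
  have hmem : r' ∈ chainFrom k lam r' ∩ Set.Ici r := ⟨.refl, h⟩
  rcases h.lt_or_eq with h | rfl
  · rw [chargeStepVal, if_neg h.not_ge, iCC, Nat.card_coe_set_eq,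
      ← Set.ncard_sdiff_singleton_add_one hmem (finite_chainFrom.inter_of_left _)]
    push_cast
    rw [add_comm, sub_add_cancel_left]
    congr 3
    ext s
    simp [chainFrom, and_assoc]
  · rw [chargeStepVal_of_le le_rfl, chainFrom_inter_eq_empty (X := Set.Ioi r) fun _ hx => hx,
      show chainFrom k lam r ∩ Set.Ici r = {r} from
        Set.eq_singleton_iff_unique_mem.2 ⟨hmem, fun _ hx => le_antisymm (InChain.le hx.1) hx.2⟩]
    simp

end ChargeStep

lemma Set.ncard_inter_Ioi_eq_add {α : Type*} [LinearOrder α] {S : Set α} (hS : S.Finite) {a b : α}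
    (hab : a ≤ b) : (S ∩ Set.Ioi a).ncard = (S ∩ Set.Ioc a b).ncard + (S ∩ Set.Ioi b).ncard := by
  have hdisj : Disjoint (S ∩ Set.Ioc a b) (S ∩ Set.Ioi b) :=
    (Set.Ioc_disjoint_Ioi le_rfl).mono Set.inter_subset_right Set.inter_subset_right
  rw [← Set.ncard_union_eq hdisj (hS.inter_of_left _) (hS.inter_of_left _),
    ← Set.inter_union_distrib_left, Set.Ioc_union_Ioi_eq_Ioi hab]

lemma Nat.exists_apply_succ_lt_le_apply {f : ℕ → ℕ} {x m : ℕ} (h₀ : x ≤ f 0) (hm : f m < x) :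
    ∃ t < m, f (t + 1) < x ∧ x ≤ f t := by
  induction m with
  | zero => exact absurd h₀ hm.not_ge
  | succ m ih =>
    by_cases hx : x ≤ f m
    · exact ⟨m, m.lt_succ_self, hm, hx⟩
    · obtain ⟨t, ht, h⟩ := ih (not_le.1 hx)
      exact ⟨t, ht.trans m.lt_succ_self, h⟩

namespace IsStringOf

variable {k ℓ : ℕ} {lam mu : KPartition} {a : ℕ → ℕ × ℕ} {i j r s t : ℕ}

lemma row_lt (h : IsStringOf k lam mu ℓ a) (hij : i < j) (hj : j < ℓ) : (a j).1 < (a i).1 := by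
  induction j, hij using Nat.le_induction with
  | base => exact (h.2.2.2 i hj).1
  | succ j hij ih => exact (h.2.2.2 j hj).1.trans (ih (by omega))

lemma row_le (h : IsStringOf k lam mu ℓ a) (hij : i ≤ j) (hj : j < ℓ) : (a j).1 ≤ (a i).1 := by
  rcases hij.lt_or_eq with hij | rfl
  · exact (h.row_lt hij hj).le
  · exact le_rfl

lemma eq_of_row_eq (h : IsStringOf k lam mu ℓ a) (hi : i < ℓ) (hj : j < ℓ)
    (he : (a i).1 = (a j).1) : i = j := by
  rcases lt_trichotomy i j with hij | hij | hij
  · exact absurd he (h.row_lt hij hj).ne'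
  · exact hij
  · exact absurd he (h.row_lt hij hi).ne

lemma mem_skewSet (h : IsStringOf k lam mu ℓ a) (ht : t < ℓ) : a t ∈ skewSet lam mu :=
  (h.2.1 _).2 ⟨t, ht, rfl⟩

lemma eq_of_mem_skewSet_of_fst_eq (h : IsStringOf k lam mu ℓ a) {b b' : ℕ × ℕ}
    (hb : b ∈ skewSet lam mu) (hb' : b' ∈ skewSet lam mu) (he : b.1 = b'.1) : b = b' := by
  obtain ⟨i, hi, rfl⟩ := (h.2.1 b).1 hb
  obtain ⟨j, hj, rfl⟩ := (h.2.1 b').1 hb'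
  rw [h.eq_of_row_eq hi hj he]

lemma snd_eq (h : IsStringOf k lam mu ℓ a) (ht : t < ℓ) : (a t).2 = lam.parts (a t).1 := by
  obtain ⟨hmu, hlam⟩ := h.mem_skewSet ht
  have hlam : lam.parts (a t).1 ≤ (a t).2 := not_lt.1 hlam
  have hmu : (a t).2 < mu.parts (a t).1 := hmu
  exact (congrArg Prod.snd (h.eq_of_mem_skewSet_of_fst_eq (b := ((a t).1, lam.parts (a t).1))
    ⟨show lam.parts (a t).1 < mu.parts (a t).1 by omega, lt_irrefl _⟩ (h.mem_skewSet ht) rfl)).symm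

lemma addCorner_eq (h : IsStringOf k lam mu ℓ a) (ht : t < ℓ) : addCorner lam (a t).1 = a t :=
  Prod.ext rfl (h.snd_eq ht).symm

lemma diagIdx_eq (h : IsStringOf k lam mu ℓ a) (ht : t < ℓ) :
    diagIdx (a t) = (lam.parts (a t).1 : ℤ) - (a t).1 := by
  rw [diagIdx, h.snd_eq ht]

lemma parts_eq (h : IsStringOf k lam mu ℓ a) (ht : t < ℓ) :
    mu.parts (a t).1 = lam.parts (a t).1 + 1 := by
  obtain ⟨hmu, -⟩ := h.mem_skewSet ht
  have hmu : (a t).2 < mu.parts (a t).1 := hmu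
  have hsnd := h.snd_eq ht
  have := congrArg Prod.snd (h.eq_of_mem_skewSet_of_fst_eq (b := ((a t).1, mu.parts (a t).1 - 1))
    ⟨show mu.parts (a t).1 - 1 < mu.parts (a t).1 by omega,
      show ¬ mu.parts (a t).1 - 1 < lam.parts (a t).1 by omega⟩ (h.mem_skewSet ht) rfl)
  dsimp only at this
  omega

lemma lt_parts_iff (h : IsStringOf k lam mu ℓ a) :
    lam.parts i < mu.parts i ↔ ∃ t < ℓ, (a t).1 = i :=
  ⟨fun hi => ((h.2.1 (i, lam.parts i)).1 ⟨hi, lt_irrefl _⟩).imp fun _ ⟨ht, he⟩ =>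
      ⟨ht, congrArg Prod.fst he⟩,
    fun ⟨_, ht, he⟩ => he ▸ (h.parts_eq ht).symm ▸ Nat.lt_succ_self _⟩

lemma rowUp_eq (h : IsStringOf k lam mu ℓ a) (hl : 0 < ℓ) : rowUp lam mu = (a 0).1 :=
  IsGreatest.csSup_eq ⟨h.lt_parts_iff.2 ⟨0, hl, rfl⟩, fun i hi => by
    obtain ⟨t, ht, rfl⟩ := h.lt_parts_iff.1 hi
    exact h.row_le (Nat.zero_le t) ht⟩

lemma rowDown_eq (h : IsStringOf k lam mu ℓ a) (hl : 0 < ℓ) : rowDown lam mu = (a (ℓ - 1)).1 :=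
  IsLeast.csInf_eq ⟨h.lt_parts_iff.2 ⟨ℓ - 1, by omega, rfl⟩, fun i hi => by
    obtain ⟨t, ht, rfl⟩ := h.lt_parts_iff.1 hi
    exact h.row_le (by omega) (by omega)⟩

lemma hasAddable_rowUp_succ (h : IsStringOf k lam mu ℓ a) (hl : 0 < ℓ) :
    HasAddable mu (rowUp lam mu + 1) := by
  rw [h.rowUp_eq hl]
  right
  have hup := h.parts_eq hl
  have hnext : ¬ lam.parts ((a 0).1 + 1) < mu.parts ((a 0).1 + 1) := fun hlt => by
    obtain ⟨t, ht, he⟩ := h.lt_parts_iff.1 hlt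
    have := h.row_le (Nat.zero_le t) ht
    omega
  have := lam.antitone_parts ((a 0).1.le_add_right 1)
  have := h.1 ((a 0).1 + 1)
  simp only [Nat.add_sub_cancel]
  omega

lemma diagIdx_succ (h : IsStringOf k lam mu ℓ a) (ht : t + 1 < ℓ) :
    diagIdx (a t) + k ≤ diagIdx (a (t + 1)) ∧ diagIdx (a (t + 1)) ≤ diagIdx (a t) + (k + 1) := by
  have hlt := diagIdx_addCorner_lt (lam := lam) (h.2.2.2 t ht).1
  rw [h.addCorner_eq ht, h.addCorner_eq (by omega : t < ℓ)] at hlt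
  have hc := (h.2.2.2 t ht).2
  unfold Contiguous cellDist at hc
  omega

/-- If row `(a t).1` ended flush with the row below it, that row would grow too, hence be the next
row of the string, whose cell would then lie on the adjacent diagonal; this is impossible for
`k ≥ 2`. -/
lemma hasAddable (hk : 2 ≤ k) (h : IsStringOf k lam mu ℓ a) (ht : t < ℓ) :
    HasAddable lam (a t).1 := by
  rcases Nat.eq_zero_or_pos (a t).1 with h0 | hpos
  · exact Or.inl h0
  obtain ⟨i, hi⟩ : ∃ i, (a t).1 = i + 1 := ⟨_, (Nat.succ_pred_eq_of_pos hpos).symm⟩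
  refine Or.inr (by_contra fun hflat => ?_)
  rw [hi, Nat.add_sub_cancel] at hflat
  have hflat : lam.parts i = lam.parts (i + 1) :=
    le_antisymm (not_lt.1 hflat) (lam.antitone_parts (i.le_add_right 1))
  obtain ⟨t', ht', he⟩ := h.lt_parts_iff.1 (show lam.parts i < mu.parts i by
    have := mu.antitone_parts (i.le_add_right 1)
    have := h.parts_eq ht
    rw [hi] at this
    omega)
  have htt' : t < t' := not_le.1 fun h' => by have := h.row_le h' ht; omega
  have hnext : (a (t + 1)).1 = i := by
    have := h.row_lt (show t < t + 1 by omega) (by omega)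
    have := h.row_le (show t + 1 ≤ t' by omega) ht'
    omega
  have := (h.diagIdx_succ (by omega : t + 1 < ℓ)).1
  rw [h.diagIdx_eq ht, h.diagIdx_eq (by omega : t + 1 < ℓ), hnext, hi, hflat] at this
  omega

lemma kConnectedBelow (hk : 2 ≤ k) (h : IsStringOf k lam mu ℓ a) (ht : t + 1 < ℓ) :
    KConnectedBelow k lam (a t).1 (a (t + 1)).1 := by
  have hd := h.diagIdx_succ ht
  refine ⟨(h.2.2.2 t ht).1, h.hasAddable hk (by omega), h.hasAddable hk ht, ?_, ?_⟩
  · rw [h.addCorner_eq ht, h.addCorner_eq (by omega : t < ℓ)]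
    unfold cellDist
    omega
  · intro v hv _ hvd
    have := (h.hasAddable hk ht).diagIdx_addCorner_add_two_le hv
    rw [h.addCorner_eq ht] at this
    rw [h.addCorner_eq (by omega : t < ℓ)] at hvd
    unfold cellDist at hvd
    omega

lemma psize_eq (h : IsStringOf k lam mu ℓ a) : psize mu = psize lam + ℓ := by
  have hskew : skewSet lam mu = a '' Set.Iio ℓ := by
    ext b
    rw [h.2.1 b]
    simp
  have hcells : {b | mu.Mem b} = {b | lam.Mem b} ∪ skewSet lam mu := by
    ext b
    have : lam.Mem b → mu.Mem b := fun hb => lt_of_lt_of_le hb (h.1 b.1)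
    simp only [skewSet, Set.mem_union, Set.mem_ofPred_eq]
    tauto
  rw [psize, psize, Nat.card_coe_set_eq, Nat.card_coe_set_eq, hcells,
    Set.ncard_union_eq (Set.disjoint_left.2 fun _ hb hb' => hb'.2 hb) lam.finite_setOf_mem
      (hskew ▸ (Set.finite_Iio ℓ).image a),
    hskew, Set.InjOn.ncard_image (s := Set.Iio ℓ) fun i hi j hj => h.2.2.1 i j hi hj]
  simp

lemma ncard_chainFrom_inter (hk : 2 ≤ k) (h : IsStringOf k lam mu ℓ a) {X : Set ℕ} (ht : t < ℓ)
    (hX : ∀ j < t, (a j).1 ∈ X) :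
    (chainFrom k lam (a 0).1 ∩ X).ncard = t + (chainFrom k lam (a t).1 ∩ X).ncard := by
  induction t with
  | zero => simp
  | succ t ih =>
    rw [ih (by omega) fun j hj => hX j (by omega),
      ncard_chainFrom_inter_of_mem (h.kConnectedBelow hk ht) (hX t t.lt_add_one)]
    omega

lemma exists_kConnectedBelow (hk : 2 ≤ k) (h : IsStringOf k lam mu ℓ a) (hs : HasAddable lam s)
    (ht : t + 1 < ℓ) (h₁ : (a (t + 1)).1 < s) (h₂ : s ≤ (a t).1) :
    ∃ u, KConnectedBelow k lam s u ∧ u ≤ (a (t + 1)).1 ∧ (t + 2 < ℓ → (a (t + 2)).1 < u) := by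
  have hd := h.diagIdx_succ ht
  have hup := diagIdx_addCorner_le (lam := lam) h₂
  have hlow := diagIdx_addCorner_lt (lam := lam) h₁
  rw [h.addCorner_eq (by omega : t < ℓ)] at hup
  rw [h.addCorner_eq ht] at hlow
  obtain ⟨u, hu, hut⟩ := exists_kConnectedBelow_le (k := k) hs (h.hasAddable hk ht) h₁ (by
    rw [h.addCorner_eq ht]
    unfold cellDist
    omega)
  refine ⟨u, hu, hut, fun ht₂ => hu.lt_of_diagIdx_le h₁ ?_⟩
  rw [h.addCorner_eq ht, h.addCorner_eq ht₂]
  exact (h.diagIdx_succ ht₂).1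

lemma ncard_chainFrom_inter_Ioi (hk : 2 ≤ k) (h : IsStringOf k lam mu ℓ a)
    (hs : HasAddable lam s) (ht : t + 1 < ℓ) (h₁ : (a (t + 1)).1 < s) (h₂ : s ≤ (a t).1) :
    (chainFrom k lam s ∩ Set.Ioi (a (ℓ - 1)).1).ncard = ℓ - 1 - t := by
  induction s using Nat.strong_induction_on generalizing t with
  | _ s ih =>
  obtain ⟨u, hu, hut, hu₂⟩ := h.exists_kConnectedBelow hk hs ht h₁ h₂
  have hs' : s ∈ Set.Ioi (a (ℓ - 1)).1 := (h.row_le (by omega) (by omega)).trans_lt h₁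
  rw [ncard_chainFrom_inter_of_mem hu hs']
  rcases lt_or_ge (t + 2) ℓ with ht₂ | ht₂
  · rw [ih u hu.lt hu.hasAddable ht₂ (hu₂ ht₂) hut]
    omega
  · rw [show ℓ - 1 = t + 1 by omega,
      chainFrom_inter_eq_empty (X := Set.Ioi _) fun x hx => hut.trans_lt hx]
    simp

lemma ncard_chainFrom_inter_Ioc (hk : 2 ≤ k) (hks : IsKShape k lam) (h : IsStringOf k lam mu ℓ a)
    (hl : 0 < ℓ) (hs : HasAddable lam s) (h₀ : (a 0).1 ≤ s) :
    (chainFrom k lam s ∩ Set.Ioc (a (ℓ - 1)).1 (a 0).1).ncard = ℓ - 1 := by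
  induction s using Nat.strong_induction_on with
  | _ s ih =>
  rcases h₀.eq_or_lt with rfl | h₀
  · rw [h.ncard_chainFrom_inter hk (X := Set.Ioc _ _) (t := ℓ - 1) (by omega)
        fun j hj => ⟨h.row_lt hj (by omega), h.row_le j.zero_le (by omega)⟩,
      chainFrom_inter_eq_empty fun x hx => hx.1]
    simp
  obtain ⟨s, rfl⟩ : ∃ s', s = s' + 1 := ⟨s - 1, by omega⟩
  obtain ⟨u, hu⟩ := hks.exists_kConnectedBelow (by omega) hs
  rw [ncard_chainFrom_inter_of_notMem hu fun hs' => hs'.2.not_gt h₀]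
  rcases le_or_gt (a 0).1 u with hu₀ | hu₀
  · exact ih u hu.lt hu.hasAddable hu₀
  rcases lt_or_ge 1 ℓ with hl₂ | hl₁
  · have h₁ : (a 1).1 < u := hu.lt_of_diagIdx_le h₀ (by
      rw [h.addCorner_eq hl, h.addCorner_eq hl₂]
      exact (h.diagIdx_succ hl₂).1)
    have hIoc : chainFrom k lam u ∩ Set.Ioc (a (ℓ - 1)).1 (a 0).1 =
        chainFrom k lam u ∩ Set.Ioi (a (ℓ - 1)).1 := by
      ext x
      simp only [Set.mem_inter_iff, Set.mem_Ioc, Set.mem_Ioi]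
      exact ⟨fun hx => ⟨hx.1, hx.2.1⟩, fun hx => ⟨hx.1, hx.2, (InChain.le hx.1).trans hu₀.le⟩⟩
    rw [hIoc, h.ncard_chainFrom_inter_Ioi hk hu.hasAddable hl₂ h₁ hu₀.le, Nat.sub_zero]
  · rw [show ℓ - 1 = 0 by omega, Set.Ioc_self, Set.inter_empty, Set.ncard_empty]

theorem chargeStepVal_rowDown_sub_rowUp (hk : 2 ≤ k) (hks : IsKShape k lam)
    (h : IsStringOf k lam mu ℓ a) (hl : 0 < ℓ) (hr : HasAddable lam r) :
    chargeStepVal k lam r (a (ℓ - 1)).1 - chargeStepVal k lam r (a 0).1 = ℓ - 1 := by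
  have hdu : (a (ℓ - 1)).1 ≤ (a 0).1 := h.row_le (Nat.zero_le _) (by omega)
  rcases le_or_gt r (a (ℓ - 1)).1 with hrd | hrd
  · rw [chargeStepVal_of_ge hrd, chargeStepVal_of_ge (hrd.trans hdu),
      h.ncard_chainFrom_inter hk (X := Set.Ici r) (t := ℓ - 1) (by omega)
        fun j hj => hrd.trans (h.row_le hj.le (by omega))]
    push_cast [Nat.one_le_iff_ne_zero.2 hl.ne']
    ring
  rcases lt_or_ge r (a 0).1 with hru | hru
  · obtain ⟨t, ht, h₁, h₂⟩ := Nat.exists_apply_succ_lt_le_apply (f := fun j => (a j).1) hru.le hrd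
    rw [chargeStepVal_of_le hrd.le, chargeStepVal_of_ge hru.le,
      h.ncard_chainFrom_inter_Ioi hk hr (by omega) h₁ h₂,
      h.ncard_chainFrom_inter hk (X := Set.Ici r) (t := t + 1) (by omega)
        fun j hj => h₂.trans (h.row_le (by omega) (by omega)),
      chainFrom_inter_eq_empty (X := Set.Ici r) fun x hx => h₁.trans_le hx]
    simp only [Set.ncard_empty]
    omega
  · rw [chargeStepVal_of_le hrd.le, chargeStepVal_of_le hru,
      Set.ncard_inter_Ioi_eq_add finite_chainFrom hdu,
      h.ncard_chainFrom_inter_Ioc hk hks hl hr hru]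
    push_cast [Nat.one_le_iff_ne_zero.2 hl.ne']
    ring

end IsStringOf

/-- moving n↑ to the position of n↓ raises the charge of the
letter n by |c_n| - 1. -/
theorem charge_shift_down (k N : ℕ) (hk : 2 ≤ k) (T : ℕ → KPartition)
    (hT : StdKShapeTableau k N T) (n : ℕ) (hn : 2 ≤ n) (hnN : n ≤ N) :
    chargeStepVal k (T (n - 1)) (rowUp (T (n - 2)) (T (n - 1)) + 1)
        (rowDown (T (n - 1)) (T n)) -
      chargeStepVal k (T (n - 1)) (rowUp (T (n - 2)) (T (n - 1)) + 1)
        (rowUp (T (n - 1)) (T n)) =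
    (psize (T n) : ℤ) - (psize (T (n - 1)) : ℤ) - 1 := by
  obtain ⟨m, rfl⟩ : ∃ m, n = m + 2 := ⟨n - 2, by omega⟩
  obtain ⟨-, -, ℓ', a', hl', hprev, -⟩ := hT.2 m (by omega)
  obtain ⟨hks, -, ℓ, a, hl, hstr, -⟩ := hT.2 (m + 1) (by omega)
  have hstr : IsStringOf k (T (m + 1)) (T (m + 2)) ℓ a := hstr
  simp only [show m + 2 - 1 = m + 1 from rfl, show m + 2 - 2 = m from rfl]
  rw [hstr.rowUp_eq hl, hstr.rowDown_eq hl, hstr.psize_eq,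
    hstr.chargeStepVal_rowDown_sub_rowUp hk hks hl (hprev.hasAddable_rowUp_succ hl')]
  push_cast
  ring
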